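/- For every k with 1 ≤ k ≤ n, both elementary symmetric polynomials e_k(z₁,…,zₙ) and e_k(w₁,…,wₙ), viewed as elements of K, lie in the intermediate field of K generated over ℂ by the 4n−5 elements ν₂, ν₃, ν̄₃, ν₄, ν̄₄, …, ν_{2n−1}, ν̄_{2n−1}. Consequently this field contains the field of all rational functions symmetric in z₁,…,zₙ and in w₁,…,wₙ separately. -/

import Mathlib

open MvPolynomial Finset

noncomputable section

def Zv (n : ℕ) (j : Fin n) : MvPolynomial (Fin n ⊕ Fin n) ℂ := X (Sum.inl j)

def Wv (n : ℕ) (j : Fin n) : MvPolynomial (Fin n ⊕ Fin n) ℂ := X (Sum.inr j)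

/-- The `k`-th normalized harmonic moment. -/
def nu (n : ℕ) [NeZero n] (k : ℕ) : MvPolynomial (Fin n ⊕ Fin n) ℂ :=
  C (Complex.I / 4) *
    ∑ j : Fin n, (Wv n j - Wv n (j + 1)) *
      ∑ m ∈ Finset.range k, Zv n j ^ (k - 1 - m) * Zv n (j + 1) ^ m

/-- The `k`-th normalized anti-harmonic moment (roles of `z` and `w` interchanged). -/
def nubar (n : ℕ) [NeZero n] (k : ℕ) : MvPolynomial (Fin n ⊕ Fin n) ℂ :=
  C (Complex.I / 4) *
    ∑ j : Fin n, (Zv n j - Zv n (j + 1)) *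
      ∑ m ∈ Finset.range k, Wv n j ^ (k - 1 - m) * Wv n (j + 1) ^ m

/-- The field of fractions `K = ℂ(z₁,…,zₙ,w₁,…,wₙ)` of `R`. -/
abbrev KK (n : ℕ) := FractionRing (MvPolynomial (Fin n ⊕ Fin n) ℂ)

/-- The field automorphism of `K` induced by the pair of variable permutations
`z_j ↦ z_{σ(j)}`, `w_j ↦ w_{τ(j)}`. -/
def permAut (n : ℕ) (σ τ : Equiv.Perm (Fin n)) : KK n ≃ₐ[ℂ] KK n :=
  IsFractionRing.algEquivOfAlgEquiv (MvPolynomial.renameEquiv ℂ (Equiv.sumCongr σ τ))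

/-- The subfield of `K` generated over `ℂ` by the `4n−5` elements
`ν₂, ν₃, ν̄₃, …, ν_{2n−1}, ν̄_{2n−1}`. -/
def genField (n : ℕ) [NeZero n] : IntermediateField ℂ (KK n) :=
  IntermediateField.adjoin ℂ
    ({algebraMap (MvPolynomial (Fin n ⊕ Fin n) ℂ) (KK n) (nu n 2)} ∪
      {x : KK n | ∃ k, 3 ≤ k ∧ k ≤ 2 * n - 1 ∧
        (x = algebraMap (MvPolynomial (Fin n ⊕ Fin n) ℂ) (KK n) (nu n k) ∨
         x = algebraMap (MvPolynomial (Fin n ⊕ Fin n) ℂ) (KK n) (nubar n k))})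

namespace Aux

variable {F : Type*} [Field F] [Algebra ℂ F]

/-- abstract moment sum -/
def momentSum (n : ℕ) [NeZero n] (k : ℕ) (x y : Fin n → F) : F :=
  algebraMap ℂ F (Complex.I / 4) *
    ∑ j : Fin n, (y j - y (j + 1)) *
      ∑ m ∈ Finset.range k, x j ^ (k - 1 - m) * x (j + 1) ^ m

def coefB (n : ℕ) [NeZero n] (x y : Fin n → F) (j : Fin n) : F :=
  (y j - y (j + 1)) / (x j - x (j + 1))

def coefA (n : ℕ) [NeZero n] (x y : Fin n → F) (j : Fin n) : F :=
  algebraMap ℂ F (Complex.I / 4) * (coefB n x y j - coefB n x y (j - 1))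

lemma telescope (n : ℕ) [NeZero n] (f : Fin n → F) :
    ∑ j : Fin n, (f j - f (j + 1)) = 0 := by
  rw [Finset.sum_sub_distrib]
  rw [Fintype.sum_equiv (Equiv.addRight (1 : Fin n)) (fun j => f (j + 1)) f (fun j => rfl)]
  exact sub_self _

lemma momentSum_eq_sum (n : ℕ) [NeZero n] (k : ℕ) (x y : Fin n → F)
    (hx : ∀ j : Fin n, x j ≠ x (j + 1)) :
    momentSum n k x y = ∑ j : Fin n, coefA n x y j * x j ^ k := by
  have hterm : ∀ j : Fin n,
      (y j - y (j + 1)) * (∑ m ∈ Finset.range k, x j ^ (k - 1 - m) * x (j + 1) ^ m)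
        = coefB n x y j * (x j ^ k - x (j + 1) ^ k) := by
    intro j
    have hgeom : (∑ m ∈ Finset.range k, x (j+1) ^ m * x j ^ (k - 1 - m)) * (x (j+1) - x j)
        = x (j+1) ^ k - x j ^ k := geom_sum₂_mul _ _ k
    have h1 : (x j - x (j + 1)) *
        (∑ m ∈ Finset.range k, x j ^ (k - 1 - m) * x (j + 1) ^ m)
        = x j ^ k - x (j + 1) ^ k := by
      have hsum : ∑ m ∈ Finset.range k, x j ^ (k - 1 - m) * x (j + 1) ^ m
          = ∑ m ∈ Finset.range k, x (j+1) ^ m * x j ^ (k - 1 - m) :=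
        Finset.sum_congr rfl (fun m _ => mul_comm _ _)
      rw [hsum]
      linear_combination -hgeom
    have hb : coefB n x y j * (x j - x (j + 1)) = y j - y (j + 1) :=
      div_mul_cancel₀ _ (sub_ne_zero.2 (hx j))
    calc (y j - y (j + 1)) * ∑ m ∈ Finset.range k, x j ^ (k - 1 - m) * x (j + 1) ^ m
        = coefB n x y j * ((x j - x (j + 1)) *
            ∑ m ∈ Finset.range k, x j ^ (k - 1 - m) * x (j + 1) ^ m) := by
          rw [← mul_assoc, hb]
      _ = coefB n x y j * (x j ^ k - x (j + 1) ^ k) := by rw [h1]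
  unfold momentSum
  simp only [hterm, mul_sub, Finset.sum_sub_distrib]
  have hre : ∑ j : Fin n, coefB n x y j * x (j+1) ^ k
      = ∑ j : Fin n, coefB n x y (j - 1) * x j ^ k := by
    refine Fintype.sum_equiv (Equiv.addRight (1 : Fin n)) _ _ (fun j => ?_)
    simp [Equiv.coe_addRight, add_sub_cancel_right]
  rw [hre, ← mul_sub, ← Finset.sum_sub_distrib, Finset.mul_sum]
  refine Finset.sum_congr rfl (fun j _ => ?_)
  unfold coefA
  ring

lemma momentSum_zero (n : ℕ) [NeZero n] (x y : Fin n → F) :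
    momentSum n 0 x y = 0 := by
  simp [momentSum]

lemma momentSum_one (n : ℕ) [NeZero n] (x y : Fin n → F) :
    momentSum n 1 x y = 0 := by
  unfold momentSum
  simp only [Finset.range_one, Finset.sum_singleton, Nat.sub_zero, Nat.sub_self, pow_zero,
    mul_one, one_mul]
  rw [telescope n y, mul_zero]

lemma momentSum_two_swap (n : ℕ) [NeZero n] (x y : Fin n → F) :
    momentSum n 2 y x = - momentSum n 2 x y := by
  have h : momentSum n 2 x y + momentSum n 2 y x = 0 := by
    unfold momentSum
    rw [← mul_add, ← Finset.sum_add_distrib]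
    have : ∀ j : Fin n,
        ((y j - y (j + 1)) * ∑ m ∈ Finset.range 2, x j ^ (2 - 1 - m) * x (j + 1) ^ m)
        + ((x j - x (j + 1)) * ∑ m ∈ Finset.range 2, y j ^ (2 - 1 - m) * y (j + 1) ^ m)
        = 2 * (x j * y j - x (j+1) * y (j+1)) := by
      intro j
      norm_num [Finset.sum_range_succ]
      ring
    simp only [this]
    have ht : ∑ j : Fin n, (x j * y j - x (j + 1) * y (j + 1)) = 0 :=
      telescope n (fun j => x j * y j)
    rw [← Finset.mul_sum, ht]
    simp
  linear_combination h

end Aux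
namespace Aux2
open Aux Polynomial Matrix

variable {F : Type*} [Field F] [Algebra ℂ F]

lemma esymm_mem (n : ℕ) [NeZero n] (hn : 3 ≤ n) (L : IntermediateField ℂ F)
    (x y : Fin n → F) (hx : Function.Injective x)
    (ha : ∀ j, Aux.coefA n x y j ≠ 0)
    (hmem : ∀ k, k ≤ 2 * n - 1 → Aux.momentSum n k x y ∈ L) :
    ∀ k : ℕ, (MvPolynomial.aeval x) (MvPolynomial.esymm (Fin n) ℂ k) ∈ L := by
  have hone : (1 : Fin n) ≠ 0 := by
    intro h
    have h1 : (1 : Fin n).val = 0 := by rw [h]; rfl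
    rw [Fin.val_one'] at h1
    rw [Nat.mod_eq_of_lt (by omega)] at h1
    exact one_ne_zero h1
  have hxne : ∀ j : Fin n, x j ≠ x (j + 1) := by
    intro j h
    have h3 := sub_eq_zero.mpr (hx h).symm
    rw [add_sub_cancel_left] at h3
    exact hone h3
  -- power sums
  set s : ℕ → F := fun t => ∑ j : Fin n, Aux.coefA n x y j * x j ^ t with hs_def
  have hsmem : ∀ t, t ≤ 2 * n - 1 → s t ∈ L := by
    intro t ht
    have h := Aux.momentSum_eq_sum n t x y hxne
    rw [hs_def]; simp only []; rw [← h]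
    exact hmem t ht
  -- node polynomial
  set P : Polynomial F := ∏ j : Fin n, (Polynomial.X - Polynomial.C (x j)) with hP_def
  have hPmonic : P.Monic :=
    monic_prod_of_monic _ _ (fun j _ => monic_X_sub_C (x j))
  have hPdeg : P.natDegree = n := by
    rw [hP_def, Polynomial.natDegree_prod _ _ (fun j _ => X_sub_C_ne_zero (x j))]
    simp [natDegree_X_sub_C]
  have hPeval : ∀ j : Fin n, P.eval (x j) = 0 := by
    intro j
    rw [hP_def, Polynomial.eval_prod]
    exact Finset.prod_eq_zero (Finset.mem_univ j) (by simp)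
  have hPsum : ∀ j : Fin n, ∑ i ∈ Finset.range (n + 1), P.coeff i * x j ^ i = 0 := by
    intro j
    have h := Polynomial.eval_eq_sum_range (p := P) (x j)
    rw [hPdeg] at h
    rw [← h]
    exact hPeval j
  have hPtop : P.coeff n = 1 := by
    have h := hPmonic.coeff_natDegree
    rwa [hPdeg] at h
  -- Vandermonde
  set V : Matrix (Fin n) (Fin n) F := Matrix.of (fun p q : Fin n => x q ^ (p : ℕ)) with hV_def
  have hVdet : V.det ≠ 0 := by
    have hVt : V = (Matrix.vandermonde x)ᵀ := rfl
    rw [hVt, Matrix.det_transpose]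
    exact Matrix.det_vandermonde_ne_zero_iff.mpr hx
  -- Hankel
  set H : Matrix (Fin n) (Fin n) F :=
    Matrix.of (fun p q : Fin n => s ((p : ℕ) + (q : ℕ))) with hH_def
  have hHfact : H = V * (Matrix.diagonal (Aux.coefA n x y) * Vᵀ) := by
    ext p q
    rw [Matrix.mul_apply]
    simp only [hH_def, Matrix.of_apply, hs_def, Matrix.diagonal_mul, Matrix.transpose_apply,
      hV_def]
    refine Finset.sum_congr rfl (fun j _ => ?_)
    rw [pow_add]; ring
  have hHdet : H.det ≠ 0 := by
    rw [hHfact, Matrix.det_mul, Matrix.det_mul, Matrix.det_diagonal, Matrix.det_transpose]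
    exact mul_ne_zero hVdet (mul_ne_zero (Finset.prod_ne_zero_iff.mpr fun j _ => ha j) hVdet)
  have hHunit : IsUnit H.det := isUnit_iff_ne_zero.mpr hHdet
  -- the linear system
  set c : Fin n → F := fun i => P.coeff i with hc_def
  have hsys : H.mulVec c = fun m : Fin n => - s ((m : ℕ) + n) := by
    funext m
    simp only [Matrix.mulVec, dotProduct, hH_def, Matrix.of_apply, hs_def, hc_def]
    calc ∑ i : Fin n, (∑ j : Fin n, Aux.coefA n x y j * x j ^ ((m : ℕ) + (i : ℕ))) * P.coeff i
        = ∑ j : Fin n, Aux.coefA n x y j * x j ^ (m : ℕ) *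
            ∑ i : Fin n, P.coeff i * x j ^ (i : ℕ) := by
          simp only [Finset.sum_mul]
          rw [Finset.sum_comm]
          refine Finset.sum_congr rfl fun j _ => ?_
          rw [Finset.mul_sum]
          refine Finset.sum_congr rfl fun i _ => ?_
          rw [pow_add]; ring
      _ = ∑ j : Fin n, Aux.coefA n x y j * x j ^ (m : ℕ) * (- (x j ^ n)) := by
          refine Finset.sum_congr rfl fun j _ => ?_
          congr 1
          have h := hPsum j
          rw [Finset.sum_range_succ, hPtop, one_mul] at h
          rw [← Fin.sum_univ_eq_sum_range (fun i => P.coeff i * x j ^ i) n] at h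
          exact eq_neg_of_add_eq_zero_left h
      _ = - ∑ j : Fin n, Aux.coefA n x y j * x j ^ ((m : ℕ) + n) := by
          rw [← Finset.sum_neg_distrib]
          refine Finset.sum_congr rfl fun j _ => ?_
          rw [pow_add]; ring
  -- matrix over the subfield L
  have hmem2 : ∀ p q : Fin n, s ((p : ℕ) + (q : ℕ)) ∈ L :=
    fun p q => hsmem _ (by have := p.isLt; have := q.isLt; omega)
  have hmem3 : ∀ m : Fin n, - s ((m : ℕ) + n) ∈ L :=
    fun m => neg_mem (hsmem _ (by have := m.isLt; omega))
  set H' : Matrix (Fin n) (Fin n) L :=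
    Matrix.of (fun p q : Fin n => (⟨s ((p : ℕ) + (q : ℕ)), hmem2 p q⟩ : L)) with hH'_def
  set r' : Fin n → L := fun m => (⟨- s ((m : ℕ) + n), hmem3 m⟩ : L) with hr'_def
  have hHmap : H'.map (algebraMap L F) = H := by
    ext p q
    simp [hH'_def, hH_def, Matrix.map_apply]
  have hdet' : H'.det ≠ 0 := by
    intro h0
    apply hHdet
    rw [← hHmap]
    have hh := RingHom.map_det (algebraMap L F) H'
    rw [h0, map_zero, RingHom.mapMatrix_apply] at hh
    exact hh.symm
  have hunit' : IsUnit H'.det := isUnit_iff_ne_zero.mpr hdet'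
  set c' : Fin n → L := (H'⁻¹).mulVec r' with hc'_def
  have hc'sys : H'.mulVec c' = r' := by
    rw [hc'_def, Matrix.mulVec_mulVec, Matrix.mul_nonsing_inv _ hunit', Matrix.one_mulVec]
  have hmapped : H.mulVec (fun i => algebraMap L F (c' i)) = fun m : Fin n => - s ((m : ℕ) + n) := by
    funext m
    have h1 : algebraMap L F ((H'.mulVec c') m) = algebraMap L F (r' m) := by rw [hc'sys]
    simp only [Matrix.mulVec, dotProduct, map_sum, _root_.map_mul] at h1 ⊢
    calc ∑ i : Fin n, H m i * algebraMap L F (c' i)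
        = ∑ i : Fin n, algebraMap L F (H' m i) * algebraMap L F (c' i) := by
          refine Finset.sum_congr rfl fun i _ => ?_
          rw [← hHmap]; rfl
      _ = algebraMap L F (r' m) := h1
      _ = - s ((m : ℕ) + n) := rfl
  have hcancel : c = fun i => algebraMap L F (c' i) := by
    have hinv := Matrix.nonsing_inv_mul H hHunit
    have h2 : H⁻¹.mulVec (H.mulVec c)
        = H⁻¹.mulVec (H.mulVec (fun i => algebraMap L F (c' i))) := by
      rw [hsys, hmapped]
    rwa [Matrix.mulVec_mulVec, Matrix.mulVec_mulVec, hinv, Matrix.one_mulVec,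
      Matrix.one_mulVec] at h2
  have hcoeffmem : ∀ i : ℕ, i ≤ n → P.coeff i ∈ L := by
    intro i hi
    rcases eq_or_lt_of_le hi with rfl | hlt
    · rw [hPtop]; exact one_mem L
    · have he : P.coeff i = algebraMap L F (c' ⟨i, hlt⟩) := by
        rw [show P.coeff i = c ⟨i, hlt⟩ from rfl, hcancel]
      rw [he]
      simp only [IntermediateField.algebraMap_apply]
      exact SetLike.coe_mem _
  -- Vieta
  intro k
  by_cases hk : k ≤ n
  · have hcard : Multiset.card (Finset.univ.val.map x) = n := by simp
    have hVieta : P.coeff (n - k)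
        = (-1 : F) ^ k * ((Finset.univ.val.map x).esymm k) := by
      have h1 : P = ((Finset.univ.val.map x).map (fun t => Polynomial.X - Polynomial.C t)).prod := by
        rw [hP_def, Multiset.map_map]; rfl
      rw [h1, Multiset.prod_X_sub_C_coeff _ (by rw [hcard]; omega), hcard]
      have h2 : n - (n - k) = k := by omega
      rw [h2]
    have hmemc := hcoeffmem (n - k) (by omega)
    rw [MvPolynomial.aeval_esymm_eq_multiset_esymm]
    have hE : (Finset.univ.val.map x).esymm k = (-1 : F) ^ k * P.coeff (n - k) := by
      rw [hVieta, ← mul_assoc, ← mul_pow]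
      norm_num
    rw [hE]
    exact mul_mem (pow_mem (neg_mem (one_mem L)) k) hmemc
  · have hz : MvPolynomial.esymm (Fin n) ℂ k = 0 := by
      rw [MvPolynomial.esymm, Finset.powersetCard_eq_empty.mpr (by simpa using by omega)]
      simp
    rw [hz, map_zero]
    exact zero_mem L

end Aux2
set_option synthInstance.maxHeartbeats 1000000
set_option maxHeartbeats 2000000
namespace Aux3
open Aux

abbrev Rn (n : ℕ) := MvPolynomial (Fin n ⊕ Fin n) ℂ

def zeta (n : ℕ) (j : Fin n) : KK n := algebraMap (Rn n) (KK n) (Zv n j)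
def omg (n : ℕ) (j : Fin n) : KK n := algebraMap (Rn n) (KK n) (Wv n j)

lemma iota_injective (n : ℕ) : Function.Injective (algebraMap (Rn n) (KK n)) :=
  IsFractionRing.injective _ _

lemma algC (n : ℕ) (c : ℂ) :
    algebraMap (Rn n) (KK n) (MvPolynomial.C c) = algebraMap ℂ (KK n) c := by
  rw [IsScalarTower.algebraMap_apply ℂ (Rn n) (KK n) c, MvPolynomial.algebraMap_eq]

lemma zeta_injective (n : ℕ) : Function.Injective (zeta n) := by
  intro i j h
  have h2 := iota_injective n h
  have h3 := MvPolynomial.X_injective (R := ℂ) h2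
  exact Sum.inl_injective h3

lemma omg_injective (n : ℕ) : Function.Injective (omg n) := by
  intro i j h
  have h2 := iota_injective n h
  have h3 := MvPolynomial.X_injective (R := ℂ) h2
  exact Sum.inr_injective h3

variable {n : ℕ} [NeZero n]

lemma nu_map (k : ℕ) :
    algebraMap (Rn n) (KK n) (nu n k) = Aux.momentSum n k (zeta n) (omg n) := by
  unfold nu Aux.momentSum
  rw [map_mul, algC, map_sum]
  congr 1
  refine Finset.sum_congr rfl fun j _ => ?_
  rw [map_mul, map_sub, map_sum]
  congr 1
  refine Finset.sum_congr rfl fun m _ => ?_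
  rw [map_mul, map_pow, map_pow]
  rfl

lemma nubar_map (k : ℕ) :
    algebraMap (Rn n) (KK n) (nubar n k) = Aux.momentSum n k (omg n) (zeta n) := by
  unfold nubar Aux.momentSum
  rw [map_mul, algC, map_sum]
  congr 1
  refine Finset.sum_congr rfl fun j _ => ?_
  rw [map_mul, map_sub, map_sum]
  congr 1
  refine Finset.sum_congr rfl fun m _ => ?_
  rw [map_mul, map_pow, map_pow]
  rfl

lemma fin_one_ne_zero (hn : 3 ≤ n) : (1 : Fin n) ≠ 0 := by
  intro h
  have h1 : (1 : Fin n).val = 0 := by rw [h]; rfl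
  rw [Fin.val_one', Nat.mod_eq_of_lt (by omega)] at h1
  exact one_ne_zero h1

lemma fin_two_ne_zero (hn : 3 ≤ n) : (1 + 1 : Fin n) ≠ 0 := by
  intro h
  have h1 : (1 : Fin n).val = 1 := by rw [Fin.val_one']; exact Nat.mod_eq_of_lt (by omega)
  have hv : ((1 + 1 : Fin n)).val = 0 := by rw [h]; rfl
  rw [Fin.val_add, h1, Nat.mod_eq_of_lt (by omega)] at hv
  omega

lemma fin_d1 (hn : 3 ≤ n) (j : Fin n) : j + 1 ≠ j := by
  intro h
  rw [add_comm] at h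
  exact fin_one_ne_zero hn (add_eq_right.mp h)

lemma fin_d2 (hn : 3 ≤ n) (j : Fin n) : j - 1 ≠ j := by
  intro h
  have h2 : j - 1 + 1 = j + 1 := by rw [h]
  rw [sub_add_cancel] at h2
  exact fin_d1 hn j h2.symm

lemma fin_d3 (hn : 3 ≤ n) (j : Fin n) : j + 1 ≠ j - 1 := by
  intro h
  have h2 : j + (1 + 1) = j := by
    have h3 := congrArg (· + 1) h
    rw [sub_add_cancel] at h3
    rw [← add_assoc]
    exact h3
  exact fin_two_ne_zero hn (add_eq_left.mp h2)

lemma cross_ne_1 (hn : 3 ≤ n) (j : Fin n) :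
    (omg n j - omg n (j + 1)) * (zeta n (j - 1) - zeta n j)
      ≠ (omg n (j - 1) - omg n j) * (zeta n j - zeta n (j + 1)) := by
  intro h
  have h2 : ((Wv n j - Wv n (j + 1)) * (Zv n (j - 1) - Zv n j) : Rn n)
      = (Wv n (j - 1) - Wv n j) * (Zv n j - Zv n (j + 1)) := by
    apply iota_injective n
    rw [map_mul, map_mul, map_sub, map_sub, map_sub, map_sub]
    exact h
  have hval := congrArg (MvPolynomial.eval
    (Sum.elim (fun i : Fin n => if i = j - 1 then (1 : ℂ) else 0)
      (fun i : Fin n => if i = j then (1 : ℂ) else 0))) h2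
  have d1 := fin_d1 hn j
  have d2 := fin_d2 hn j
  have d3 := fin_d3 hn j
  simp only [Zv, Wv, map_mul, map_sub, MvPolynomial.eval_X, Sum.elim_inl, Sum.elim_inr,
    if_pos rfl, if_neg d1, if_neg d2, if_neg d3, if_neg (Ne.symm d2)] at hval
  norm_num at hval

lemma cross_ne_2 (hn : 3 ≤ n) (j : Fin n) :
    (zeta n j - zeta n (j + 1)) * (omg n (j - 1) - omg n j)
      ≠ (zeta n (j - 1) - zeta n j) * (omg n j - omg n (j + 1)) := by
  intro h
  have h2 : ((Zv n j - Zv n (j + 1)) * (Wv n (j - 1) - Wv n j) : Rn n)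
      = (Zv n (j - 1) - Zv n j) * (Wv n j - Wv n (j + 1)) := by
    apply iota_injective n
    rw [map_mul, map_mul, map_sub, map_sub, map_sub, map_sub]
    exact h
  have hval := congrArg (MvPolynomial.eval
    (Sum.elim (fun i : Fin n => if i = j then (1 : ℂ) else 0)
      (fun i : Fin n => if i = j - 1 then (1 : ℂ) else 0))) h2
  have d1 := fin_d1 hn j
  have d2 := fin_d2 hn j
  have d3 := fin_d3 hn j
  simp only [Zv, Wv, map_mul, map_sub, MvPolynomial.eval_X, Sum.elim_inl, Sum.elim_inr,
    if_pos rfl, if_neg d1, if_neg d2, if_neg d3, if_neg (Ne.symm d2)] at hval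
  norm_num at hval

end Aux3
namespace Aux4
open Aux Aux3

lemma coefA_ne_zero {F : Type*} [Field F] [Algebra ℂ F] (n : ℕ) [NeZero n]
    (x y : Fin n → F) (j : Fin n)
    (hxne : ∀ i : Fin n, x i ≠ x (i + 1))
    (hcross : (y j - y (j + 1)) * (x (j - 1) - x j)
      ≠ (y (j - 1) - y j) * (x j - x (j + 1))) :
    Aux.coefA n x y j ≠ 0 := by
  unfold Aux.coefA Aux.coefB
  intro h
  rcases mul_eq_zero.mp h with h0 | h0
  · have hi : (Complex.I / 4 : ℂ) ≠ 0 := by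
      simp [Complex.I_ne_zero]
    exact hi ((map_eq_zero_iff _ (algebraMap ℂ F).injective).mp h0)
  · rw [sub_eq_zero, sub_add_cancel] at h0
    have hd : x (j - 1) ≠ x j := by
      have h1 := hxne (j - 1)
      rwa [sub_add_cancel] at h1
    rw [div_eq_div_iff (sub_ne_zero.2 (hxne j)) (sub_ne_zero.2 hd)] at h0
    exact hcross h0

variable {n : ℕ} [NeZero n]

lemma zeta_ne (hn : 3 ≤ n) (j : Fin n) : zeta n j ≠ zeta n (j + 1) :=
  fun h => fin_d1 hn j ((zeta_injective n h).symm)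

lemma omg_ne (hn : 3 ≤ n) (j : Fin n) : omg n j ≠ omg n (j + 1) :=
  fun h => fin_d1 hn j ((omg_injective n h).symm)

lemma coefA_z_ne (hn : 3 ≤ n) (j : Fin n) : Aux.coefA n (zeta n) (omg n) j ≠ 0 :=
  coefA_ne_zero n _ _ j (zeta_ne hn) (cross_ne_1 hn j)

lemma coefA_w_ne (hn : 3 ≤ n) (j : Fin n) : Aux.coefA n (omg n) (zeta n) j ≠ 0 :=
  coefA_ne_zero n _ _ j (omg_ne hn) (cross_ne_2 hn j)

lemma gen_nu_mem (hn : 3 ≤ n) (k : ℕ) (hk : 2 ≤ k) (hk2 : k ≤ 2 * n - 1) :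
    algebraMap (Rn n) (KK n) (nu n k) ∈ genField n := by
  apply IntermediateField.subset_adjoin
  rcases eq_or_lt_of_le hk with h2 | h3
  · left
    rw [← h2]
    exact rfl
  · exact Or.inr ⟨k, h3, hk2, Or.inl rfl⟩

lemma nubar_two :
    algebraMap (Rn n) (KK n) (nubar n 2) = - algebraMap (Rn n) (KK n) (nu n 2) := by
  rw [nu_map, nubar_map, Aux.momentSum_two_swap]

lemma moments_z_mem (hn : 3 ≤ n) :
    ∀ k, k ≤ 2 * n - 1 → Aux.momentSum n k (zeta n) (omg n) ∈ genField n := by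
  intro k hk
  match k with
  | 0 => rw [Aux.momentSum_zero]; exact zero_mem _
  | 1 => rw [Aux.momentSum_one]; exact zero_mem _
  | (k + 2) => rw [← nu_map]; exact gen_nu_mem hn _ (by omega) hk

lemma moments_w_mem (hn : 3 ≤ n) :
    ∀ k, k ≤ 2 * n - 1 → Aux.momentSum n k (omg n) (zeta n) ∈ genField n := by
  intro k hk
  match k with
  | 0 => rw [Aux.momentSum_zero]; exact zero_mem _
  | 1 => rw [Aux.momentSum_one]; exact zero_mem _
  | 2 =>
    rw [← nubar_map, nubar_two]
    exact neg_mem (gen_nu_mem hn 2 le_rfl (by omega))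
  | (k + 3) =>
    rw [← nubar_map]
    apply IntermediateField.subset_adjoin
    exact Or.inr ⟨k + 3, by omega, hk, Or.inr rfl⟩

lemma iota_rename_inl (p : MvPolynomial (Fin n) ℂ) :
    algebraMap (Rn n) (KK n) (MvPolynomial.rename Sum.inl p)
      = MvPolynomial.aeval (zeta n) p := by
  induction p using MvPolynomial.induction_on with
  | C c => rw [MvPolynomial.rename_C, algC, MvPolynomial.aeval_C]
  | add p q hp hq => simp only [map_add, hp, hq]
  | mul_X p s hp =>
    simp only [map_mul, hp, MvPolynomial.rename_X, MvPolynomial.aeval_X]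
    rfl

lemma iota_rename_inr (p : MvPolynomial (Fin n) ℂ) :
    algebraMap (Rn n) (KK n) (MvPolynomial.rename Sum.inr p)
      = MvPolynomial.aeval (omg n) p := by
  induction p using MvPolynomial.induction_on with
  | C c => rw [MvPolynomial.rename_C, algC, MvPolynomial.aeval_C]
  | add p q hp hq => simp only [map_add, hp, hq]
  | mul_X p s hp =>
    simp only [map_mul, hp, MvPolynomial.rename_X, MvPolynomial.aeval_X]
    rfl

lemma esymm_z_mem (hn : 3 ≤ n) (k : ℕ) :
    algebraMap (Rn n) (KK n)
      (MvPolynomial.rename Sum.inl (MvPolynomial.esymm (Fin n) ℂ k)) ∈ genField n := by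
  rw [iota_rename_inl]
  exact Aux2.esymm_mem n hn (genField n) (zeta n) (omg n) (zeta_injective n)
    (coefA_z_ne hn) (moments_z_mem hn) k

lemma esymm_w_mem (hn : 3 ≤ n) (k : ℕ) :
    algebraMap (Rn n) (KK n)
      (MvPolynomial.rename Sum.inr (MvPolynomial.esymm (Fin n) ℂ k)) ∈ genField n := by
  rw [iota_rename_inr]
  exact Aux2.esymm_mem n hn (genField n) (omg n) (zeta n) (omg_injective n)
    (coefA_w_ne hn) (moments_w_mem hn) k

end Aux4
namespace Aux5
open Aux Aux3 Aux4

variable {n : ℕ} [NeZero n]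

/-- subfield generated by the elementary symmetric functions of the two variable groups -/
def symField (n : ℕ) [NeZero n] : IntermediateField ℂ (KK n) :=
  IntermediateField.adjoin ℂ
    ((Set.range fun k => MvPolynomial.aeval (zeta n) (MvPolynomial.esymm (Fin n) ℂ k)) ∪
     (Set.range fun k => MvPolynomial.aeval (omg n) (MvPolynomial.esymm (Fin n) ℂ k)))

lemma symField_le (hn : 3 ≤ n) : symField n ≤ genField n := by
  rw [symField, IntermediateField.adjoin_le_iff]
  rintro x (⟨k, rfl⟩ | ⟨k, rfl⟩)
  · beta_reduce
    rw [← iota_rename_inl]; exact esymm_z_mem hn k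
  · beta_reduce
    rw [← iota_rename_inr]; exact esymm_w_mem hn k

lemma esymm_z_mem_symField (k : ℕ) :
    MvPolynomial.aeval (zeta n) (MvPolynomial.esymm (Fin n) ℂ k) ∈ symField n :=
  IntermediateField.subset_adjoin _ _ (Or.inl ⟨k, rfl⟩)

lemma esymm_w_mem_symField (k : ℕ) :
    MvPolynomial.aeval (omg n) (MvPolynomial.esymm (Fin n) ℂ k) ∈ symField n :=
  IntermediateField.subset_adjoin _ _ (Or.inr ⟨k, rfl⟩)

lemma nodal_coeff_mem {F : Type*} [Field F] [Algebra ℂ F] (L : IntermediateField ℂ F)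
    (x : Fin n → F)
    (hsym : ∀ k, MvPolynomial.aeval x (MvPolynomial.esymm (Fin n) ℂ k) ∈ L) :
    ∀ i, (∏ j : Fin n, (Polynomial.X - Polynomial.C (x j))).coeff i ∈ L := by
  intro i
  set P : Polynomial F := ∏ j : Fin n, (Polynomial.X - Polynomial.C (x j)) with hP
  have hPdeg : P.natDegree = n := by
    rw [hP, Polynomial.natDegree_prod _ _ (fun j _ => Polynomial.X_sub_C_ne_zero (x j))]
    simp [Polynomial.natDegree_X_sub_C]
  by_cases hi : i ≤ n
  · have h1 : P = ((Finset.univ.val.map x).map fun t => Polynomial.X - Polynomial.C t).prod := by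
      rw [hP, Multiset.map_map]; rfl
    have hcard : Multiset.card (Finset.univ.val.map x) = n := by simp
    rw [h1, Multiset.prod_X_sub_C_coeff _ (by rw [hcard]; omega), hcard]
    have h2 := hsym (n - i)
    rw [MvPolynomial.aeval_esymm_eq_multiset_esymm] at h2
    exact mul_mem (pow_mem (neg_mem (one_mem L)) _) h2
  · rw [Polynomial.coeff_eq_zero_of_natDegree_lt (by rw [hPdeg]; omega)]
    exact zero_mem L

lemma descend {F : Type*} [Field F] [Algebra ℂ F] (L : IntermediateField ℂ F)
    (Q : Polynomial F) (N : ℕ) (hdeg : Q.natDegree < N) (h : ∀ i, Q.coeff i ∈ L) :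
    ∃ f : Polynomial L, f.map (algebraMap L F) = Q := by
  refine ⟨∑ i ∈ Finset.range N, Polynomial.C (⟨Q.coeff i, h i⟩ : L) * Polynomial.X ^ i, ?_⟩
  rw [Polynomial.map_sum]
  conv_rhs => rw [Polynomial.as_sum_range' Q N hdeg]
  refine Finset.sum_congr rfl fun i _ => ?_
  rw [Polynomial.map_mul, Polynomial.map_C, Polynomial.map_pow, Polynomial.map_X,
    Polynomial.C_mul_X_pow_eq_monomial]
  rfl

lemma invariant_mem_symField (hn : 3 ≤ n) (x : KK n)
    (hx : ∀ σ τ : Equiv.Perm (Fin n), permAut n σ τ x = x) : x ∈ symField n := by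
  classical
  set L : IntermediateField ℂ (KK n) := symField n with hL
  set Q1 : Polynomial (KK n) := ∏ j : Fin n, (Polynomial.X - Polynomial.C (zeta n j)) with hQ1
  set Q2 : Polynomial (KK n) := ∏ j : Fin n, (Polynomial.X - Polynomial.C (omg n j)) with hQ2
  have hQ1monic : Q1.Monic := Polynomial.monic_prod_of_monic _ _
    (fun j _ => Polynomial.monic_X_sub_C (zeta n j))
  have hQ2monic : Q2.Monic := Polynomial.monic_prod_of_monic _ _
    (fun j _ => Polynomial.monic_X_sub_C (omg n j))
  have hQ1mem : ∀ i, Q1.coeff i ∈ L := nodal_coeff_mem L (zeta n) esymm_z_mem_symField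
  have hQ2mem : ∀ i, Q2.coeff i ∈ L := nodal_coeff_mem L (omg n) esymm_w_mem_symField
  have hQmem : ∀ i, (Q1 * Q2).coeff i ∈ L := by
    intro i
    rw [Polynomial.coeff_mul]
    exact sum_mem fun p _ => mul_mem (hQ1mem _) (hQ2mem _)
  have hQ1deg : Q1.natDegree = n := by
    rw [hQ1, Polynomial.natDegree_prod _ _ (fun j _ => Polynomial.X_sub_C_ne_zero _)]
    simp [Polynomial.natDegree_X_sub_C]
  have hQ2deg : Q2.natDegree = n := by
    rw [hQ2, Polynomial.natDegree_prod _ _ (fun j _ => Polynomial.X_sub_C_ne_zero _)]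
    simp [Polynomial.natDegree_X_sub_C]
  obtain ⟨f, hf⟩ := descend L (Q1 * Q2) (2 * n + 1)
    (by rw [Polynomial.natDegree_mul hQ1monic.ne_zero hQ2monic.ne_zero, hQ1deg, hQ2deg]; omega)
    hQmem
  obtain ⟨f1, hf1⟩ := descend L Q1 (n + 1) (by rw [hQ1deg]; omega) hQ1mem
  obtain ⟨f2, hf2⟩ := descend L Q2 (n + 1) (by rw [hQ2deg]; omega) hQ2mem
  set ρ : Fin n ⊕ Fin n → KK n := Sum.elim (zeta n) (omg n) with hρ
  have hρX : ∀ v, ρ v = algebraMap (Rn n) (KK n) (MvPolynomial.X v) := by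
    rintro (v | v) <;> rfl
  have hρinj : Function.Injective ρ := by
    intro a b hab
    rw [hρX, hρX] at hab
    exact MvPolynomial.X_injective (iota_injective n hab)
  have hQprod : Q1 * Q2 = ∏ v : Fin n ⊕ Fin n, (Polynomial.X - Polynomial.C (ρ v)) := by
    rw [Fintype.prod_sum_type]
    rfl
  have hsep : f.Separable := by
    rw [← Polynomial.separable_map (algebraMap L (KK n)), hf, hQprod]
    exact (Polynomial.separable_prod_X_sub_C_iff).mpr hρinj
  have hsplits : Polynomial.Splits (f.map (algebraMap L (KK n))) := by
    rw [hf]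
    exact Polynomial.Splits.mul
      (Polynomial.Splits.prod (fun j _ => Polynomial.Splits.X_sub_C _))
      (Polynomial.Splits.prod (fun j _ => Polynomial.Splits.X_sub_C _))
  have hfne : f ≠ 0 := by
    intro h0
    rw [h0, Polynomial.map_zero] at hf
    exact mul_ne_zero hQ1monic.ne_zero hQ2monic.ne_zero hf.symm
  have hroot : ∀ v, algebraMap (Rn n) (KK n) (MvPolynomial.X v) ∈ f.rootSet (KK n) := by
    intro v
    rw [Polynomial.mem_rootSet]
    refine ⟨hfne, ?_⟩
    rw [Polynomial.aeval_def, ← Polynomial.eval_map, hf, hQprod, Polynomial.eval_prod]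
    refine Finset.prod_eq_zero (Finset.mem_univ v) ?_
    rw [Polynomial.eval_sub, Polynomial.eval_X, Polynomial.eval_C, hρX, sub_self]
  have halg : ∀ s ∈ f.rootSet (KK n), IsAlgebraic L s :=
    fun s hs => isAlgebraic_of_mem_rootSet hs
  have hIFtop : IntermediateField.adjoin L (f.rootSet (KK n)) = ⊤ := by
    rw [eq_top_iff]
    rintro t -
    have hpoly : ∀ p : Rn n, algebraMap (Rn n) (KK n) p
        ∈ IntermediateField.adjoin L (f.rootSet (KK n)) := by
      intro p
      induction p using MvPolynomial.induction_on with
      | C c =>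
        rw [algC]
        exact (IntermediateField.adjoin L (f.rootSet (KK n))).algebraMap_mem
          (⟨algebraMap ℂ (KK n) c, L.algebraMap_mem c⟩ : L)
      | add p q hp hq => rw [map_add]; exact add_mem hp hq
      | mul_X p v hp =>
        rw [map_mul]
        exact mul_mem hp (IntermediateField.subset_adjoin _ _ (hroot v))
    obtain ⟨p, q, -, rfl⟩ := IsFractionRing.div_surjective (A := Rn n) t
    exact div_mem (hpoly p) (hpoly q)
  haveI hsf : Polynomial.IsSplittingField L (KK n) f := by
    refine ⟨hsplits, ?_⟩
    have h1 := IntermediateField.adjoin_toSubalgebra_of_isAlgebraic halg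
    rw [hIFtop, IntermediateField.top_toSubalgebra] at h1
    exact h1.symm
  haveI : FiniteDimensional L (KK n) := Polynomial.IsSplittingField.finiteDimensional (KK n) f
  haveI : IsGalois L (KK n) := IsGalois.of_separable_splitting_field hsep
  have key : ∀ φ : (KK n) ≃ₐ[L] (KK n), φ x = x := by
    intro φ
    have hzroot : ∀ j : Fin n, ∃ l : Fin n, φ (zeta n j) = zeta n l := by
      intro j
      have h0 : Polynomial.aeval (zeta n j) f1 = 0 := by
        rw [Polynomial.aeval_def, ← Polynomial.eval_map, hf1, hQ1, Polynomial.eval_prod]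
        exact Finset.prod_eq_zero (Finset.mem_univ j)
          (by rw [Polynomial.eval_sub, Polynomial.eval_X, Polynomial.eval_C, sub_self])
      have h1 : Polynomial.aeval (φ (zeta n j)) f1 = 0 := by
        rw [Polynomial.aeval_algHom_apply φ (zeta n j) f1, h0, map_zero]
      rw [Polynomial.aeval_def, ← Polynomial.eval_map, hf1, hQ1, Polynomial.eval_prod] at h1
      obtain ⟨l, -, hl⟩ := Finset.prod_eq_zero_iff.mp h1
      rw [Polynomial.eval_sub, Polynomial.eval_X, Polynomial.eval_C, sub_eq_zero] at hl
      exact ⟨l, hl⟩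
    have hwroot : ∀ j : Fin n, ∃ l : Fin n, φ (omg n j) = omg n l := by
      intro j
      have h0 : Polynomial.aeval (omg n j) f2 = 0 := by
        rw [Polynomial.aeval_def, ← Polynomial.eval_map, hf2, hQ2, Polynomial.eval_prod]
        exact Finset.prod_eq_zero (Finset.mem_univ j)
          (by rw [Polynomial.eval_sub, Polynomial.eval_X, Polynomial.eval_C, sub_self])
      have h1 : Polynomial.aeval (φ (omg n j)) f2 = 0 := by
        rw [Polynomial.aeval_algHom_apply φ (omg n j) f2, h0, map_zero]
      rw [Polynomial.aeval_def, ← Polynomial.eval_map, hf2, hQ2, Polynomial.eval_prod] at h1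
      obtain ⟨l, -, hl⟩ := Finset.prod_eq_zero_iff.mp h1
      rw [Polynomial.eval_sub, Polynomial.eval_X, Polynomial.eval_C, sub_eq_zero] at hl
      exact ⟨l, hl⟩
    choose σ0 hσ0 using hzroot
    choose τ0 hτ0 using hwroot
    have hσinj : Function.Injective σ0 := by
      intro a b hab
      have h1 : φ (zeta n a) = φ (zeta n b) := by rw [hσ0 a, hσ0 b, hab]
      exact zeta_injective n (φ.injective h1)
    have hτinj : Function.Injective τ0 := by
      intro a b hab
      have h1 : φ (omg n a) = φ (omg n b) := by rw [hτ0 a, hτ0 b, hab]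
      exact omg_injective n (φ.injective h1)
    set σ : Equiv.Perm (Fin n) := Equiv.ofBijective σ0
      (Finite.injective_iff_bijective.mp hσinj) with hσdef
    set τ : Equiv.Perm (Fin n) := Equiv.ofBijective τ0
      (Finite.injective_iff_bijective.mp hτinj) with hτdef
    have hps : ∀ j, permAut n σ τ (zeta n j) = zeta n (σ0 j) := by
      intro j
      show permAut n σ τ (algebraMap (Rn n) (KK n) (MvPolynomial.X (Sum.inl j))) = _
      rw [permAut, IsFractionRing.algEquivOfAlgEquiv_algebraMap]
      simp only [MvPolynomial.renameEquiv_apply, MvPolynomial.rename_X, Equiv.sumCongr_apply,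
        Sum.map_inl]
      rfl
    have hpt : ∀ j, permAut n σ τ (omg n j) = omg n (τ0 j) := by
      intro j
      show permAut n σ τ (algebraMap (Rn n) (KK n) (MvPolynomial.X (Sum.inr j))) = _
      rw [permAut, IsFractionRing.algEquivOfAlgEquiv_algebraMap]
      simp only [MvPolynomial.renameEquiv_apply, MvPolynomial.rename_X, Equiv.sumCongr_apply,
        Sum.map_inr]
      rfl
    have hagree : ∀ p : Rn n,
        φ (algebraMap (Rn n) (KK n) p) = permAut n σ τ (algebraMap (Rn n) (KK n) p) := by
      intro p
      induction p using MvPolynomial.induction_on with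
      | C c =>
        rw [algC]
        have hC : algebraMap ℂ (KK n) c
            = algebraMap L (KK n) (⟨algebraMap ℂ (KK n) c, L.algebraMap_mem c⟩ : L) := rfl
        rw [hC, AlgEquiv.commutes, ← hC, (permAut n σ τ).commutes]
      | add p q hp hq => simp only [map_add, hp, hq]
      | mul_X p v hp =>
        simp only [map_mul, hp]
        congr 1
        cases v with
        | inl j =>
          show φ (zeta n j) = permAut n σ τ (zeta n j)
          rw [hσ0 j, hps j]
        | inr j =>
          show φ (omg n j) = permAut n σ τ (omg n j)
          rw [hτ0 j, hpt j]
    have hdiv : φ x = permAut n σ τ x := by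
      obtain ⟨p, q, -, rfl⟩ := IsFractionRing.div_surjective (A := Rn n) x
      rw [map_div₀, map_div₀, hagree p, hagree q]
    rw [hdiv]
    exact hx σ τ
  have hfix : x ∈ IntermediateField.fixedField (⊤ : Subgroup ((KK n) ≃ₐ[L] (KK n))) :=
    fun g => key g.1
  have hbot : IntermediateField.fixedField (⊤ : Subgroup ((KK n) ≃ₐ[L] (KK n))) = ⊥ :=
    OrderIso.map_bot (IsGalois.intermediateFieldEquivSubgroup).symm
  rw [hbot, IntermediateField.mem_bot] at hfix
  obtain ⟨y, hy⟩ := hfix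
  rw [← hy, IntermediateField.algebraMap_apply]
  exact y.2

end Aux5

/-- For `1 ≤ k ≤ n` the elementary symmetric polynomials `e_k(z₁,…,zₙ)` and `e_k(w₁,…,wₙ)`
lie in the subfield of `K` generated over `ℂ` by `ν₂, ν₃, ν̄₃, …, ν_{2n−1}, ν̄_{2n−1}`;
consequently this subfield contains every rational function symmetric in the `z`'s and in
the `w`'s separately. -/
theorem statement9 (n : ℕ) [NeZero n] (hn : 3 ≤ n) :
    (∀ k : ℕ, 1 ≤ k → k ≤ n →
      algebraMap (MvPolynomial (Fin n ⊕ Fin n) ℂ) (KK n)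
          (MvPolynomial.rename Sum.inl (MvPolynomial.esymm (Fin n) ℂ k)) ∈ genField n ∧
      algebraMap (MvPolynomial (Fin n ⊕ Fin n) ℂ) (KK n)
          (MvPolynomial.rename Sum.inr (MvPolynomial.esymm (Fin n) ℂ k)) ∈ genField n) ∧
    (∀ x : KK n, (∀ σ τ : Equiv.Perm (Fin n), permAut n σ τ x = x) → x ∈ genField n) := by
  constructor
  · intro k _ _
    exact ⟨Aux4.esymm_z_mem hn k, Aux4.esymm_w_mem hn k⟩
  · intro x hx
    exact Aux5.symField_le hn (Aux5.invariant_mem_symField hn x hx)
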